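/- arXiv:2301.12760 — 7 statements merged into one kernel-verified Lean document; each statement's English description precedes it below -/
import Mathlib

section
/- Let H be a hyperfield with an ordering H⁺. Define a ≺ b if and only if b ⊞ (-a) ⊆ H⁺. Then ≺ is a strict partial order on H: it is irreflexive, asymmetric, and transitive. -/
/-- The data of a hyperfield: a multivalued addition, multiplication,
negation, zero and one. -/
structure HyperfieldData (H : Type*) where
  hadd : H → H → Set H
  mul : H → H → H
  neg : H → H
  zero : H
  one : H

/-- The hyperfield axioms. -/
structure IsHyperfield {H : Type*} (D : HyperfieldData H) : Prop where
  hadd_nonempty : ∀ a b, (D.hadd a b).Nonempty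
  hadd_comm : ∀ a b, D.hadd a b = D.hadd b a
  hadd_assoc : ∀ a b c, (⋃ x ∈ D.hadd a b, D.hadd x c) = ⋃ y ∈ D.hadd b c, D.hadd a y
  zero_hadd : ∀ a, D.hadd D.zero a = {a}
  neg_mem : ∀ a, D.zero ∈ D.hadd a (D.neg a)
  neg_unique : ∀ a b, D.zero ∈ D.hadd a b → b = D.neg a
  reverse : ∀ a b c, a ∈ D.hadd b c ↔ c ∈ D.hadd a (D.neg b)
  mul_comm : ∀ a b, D.mul a b = D.mul b a
  mul_assoc : ∀ a b c, D.mul (D.mul a b) c = D.mul a (D.mul b c)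
  one_mul : ∀ a, D.mul D.one a = a
  mul_inv : ∀ a, a ≠ D.zero → ∃ b, D.mul a b = D.one
  zero_mul : ∀ a, D.mul D.zero a = D.zero
  distrib : ∀ a b c, D.mul a '' D.hadd b c = D.hadd (D.mul a b) (D.mul a c)
  zero_ne_one : D.zero ≠ D.one

/-- An ordering on a hyperfield: a set of positive elements closed under
hyperaddition and multiplication such that `H = P ⊔ {0} ⊔ (-P)`. -/
def IsOrdering {H : Type*} (D : HyperfieldData H) (P : Set H) : Prop :=
  (∀ a ∈ P, ∀ b ∈ P, D.hadd a b ⊆ P) ∧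
  (∀ a ∈ P, ∀ b ∈ P, D.mul a b ∈ P) ∧
  (∀ x : H, x ∈ P ∨ x = D.zero ∨ x ∈ D.neg '' P) ∧
  D.zero ∉ P ∧ D.zero ∉ D.neg '' P ∧ Disjoint P (D.neg '' P)

/-- A hyperfield homomorphism. -/
def IsHom {H1 H2 : Type*} (D1 : HyperfieldData H1) (D2 : HyperfieldData H2)
    (f : H1 → H2) : Prop :=
  (∀ a b, f '' D1.hadd a b ⊆ D2.hadd (f a) (f b)) ∧
  (∀ a b, f (D1.mul a b) = D2.mul (f a) (f b)) ∧
  f D1.one = D2.one ∧ f D1.zero = D2.zero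

/-- on an ordered hyperfield, `a ≺ b ↔ b ⊞ (-a) ⊆ H⁺` is a
strict partial order: irreflexive, asymmetric and transitive. -/
theorem stmt3 {H : Type*} (D : HyperfieldData H) (hD : IsHyperfield D)
    (P : Set H) (hP : IsOrdering D P) :
    (∀ a : H, ¬ D.hadd a (D.neg a) ⊆ P) ∧
    (∀ a b : H, D.hadd b (D.neg a) ⊆ P → ¬ D.hadd a (D.neg b) ⊆ P) ∧
    (∀ a b c : H, D.hadd b (D.neg a) ⊆ P → D.hadd c (D.neg b) ⊆ P →
      D.hadd c (D.neg a) ⊆ P) := by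
  obtain ⟨hPadd, -, -, hz, -, -⟩ := hP
  have irrefl : ∀ a : H, ¬ D.hadd a (D.neg a) ⊆ P := fun a h =>
    hz (h (hD.neg_mem a))
  have trans : ∀ a b c : H, D.hadd b (D.neg a) ⊆ P → D.hadd c (D.neg b) ⊆ P →
      D.hadd c (D.neg a) ⊆ P := by
    intro a b c hab hbc
    have h1 : D.neg a ∈ ⋃ x ∈ D.hadd (D.neg b) b, D.hadd x (D.neg a) := by
      have hz0 : D.zero ∈ D.hadd (D.neg b) b := by
        rw [hD.hadd_comm]; exact hD.neg_mem b
      have : D.neg a ∈ D.hadd D.zero (D.neg a) := by rw [hD.zero_hadd]; rfl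
      exact Set.mem_biUnion hz0 this
    rw [hD.hadd_assoc] at h1
    obtain ⟨y, hy, hna⟩ := Set.mem_iUnion₂.mp h1
    intro z hz'
    have h2 : z ∈ ⋃ w ∈ D.hadd c (D.neg b), D.hadd w y := by
      rw [hD.hadd_assoc]
      exact Set.mem_biUnion hna hz'
    obtain ⟨w, hw, hzw⟩ := Set.mem_iUnion₂.mp h2
    exact hPadd w (hbc hw) y (hab hy) hzw
  exact ⟨irrefl, fun a b hab hba => irrefl a (trans a b a hab hba), trans⟩
end

section
/- Let H be a stringent hyperfield with an ordering H⁺, and define a ≺ b iff b ⊞ (-a) ⊆ H⁺. Then ≺ is a strict total order: for all a, b ∈ H with a ≠ b, either a ≺ b or b ≺ a. -/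
/-- A hyperfield is stringent if `a ⊞ b` is a singleton unless `b = -a`. -/
def Stringent {H : Type*} (D : HyperfieldData H) : Prop :=
  ∀ a b : H, b ≠ D.neg a → ∃ c, D.hadd a b = {c}

/-- on an ordered stringent hyperfield, the relation
`a ≺ b ↔ b ⊞ (-a) ⊆ H⁺` is total on distinct elements. -/
theorem stmt4 {H : Type*} (D : HyperfieldData H) (hD : IsHyperfield D)
    (hs : Stringent D) (P : Set H) (hP : IsOrdering D P) :
    ∀ a b : H, a ≠ b → D.hadd b (D.neg a) ⊆ P ∨ D.hadd a (D.neg b) ⊆ P := by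
  have negneg : ∀ x : H, D.neg (D.neg x) = x := by
    intro x
    have h0 : D.zero ∈ D.hadd (D.neg x) x := by
      rw [hD.hadd_comm]; exact hD.neg_mem x
    exact (hD.neg_unique _ _ h0).symm
  have neg_inj : ∀ x y : H, D.neg x = D.neg y → x = y := by
    intro x y h
    have := congrArg D.neg h
    rwa [negneg, negneg] at this
  intro a b hab
  -- b ⊞ (-a) is a singleton {c}
  have hne : D.neg a ≠ D.neg b := fun h => hab (neg_inj _ _ h)
  obtain ⟨c, hc⟩ := hs b (D.neg a) (fun h => hne (h ▸ rfl))
  have hcmem : c ∈ D.hadd b (D.neg a) := by rw [hc]; exact rfl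
  -- then -c ∈ a ⊞ (-b)
  have h1 : D.neg a ∈ D.hadd c (D.neg b) := (hD.reverse c b (D.neg a)).mp hcmem
  have h2 : D.neg b ∈ D.hadd (D.neg a) (D.neg c) := (hD.reverse _ _ _).mp h1
  have h3 : D.neg c ∈ D.hadd (D.neg b) (D.neg (D.neg a)) := (hD.reverse _ _ _).mp h2
  rw [negneg] at h3
  have h3' : D.neg c ∈ D.hadd a (D.neg b) := by rwa [hD.hadd_comm] at h3
  -- a ⊞ (-b) is a singleton
  have hne2 : D.neg b ≠ D.neg a := fun h => hne h.symm
  obtain ⟨c', hc'⟩ := hs a (D.neg b) (fun h => hne2 (h ▸ rfl))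
  have hc'eq : c' = D.neg c := by
    rw [hc'] at h3'; exact h3'.symm
  -- c ≠ 0
  have hc0 : c ≠ D.zero := by
    intro h
    subst h
    have := hD.neg_unique _ _ hcmem
    exact hne this
  rcases (hP.2.2.1 c) with hcp | hcz | hcn
  · left; rw [hc]; intro x hx; rwa [Set.mem_singleton_iff.mp hx]
  · exact absurd hcz hc0
  · right
    obtain ⟨p, hp, hpc⟩ := hcn
    rw [hc', hc'eq]
    intro x hx
    rw [Set.mem_singleton_iff.mp hx, ← hpc, negneg]
    exact hp
end

section
/- In the factor hyperfield H = ℚ/(ℚ×)², where (ℚ×)² is the group of nonzero rational squares, for any two positive rationals a and b lying in distinct square classes, the cosets of a and b are incomparable under the relation x̄ ≺ ȳ defined by ȳ ⊞ (-x̄) ⊆ H⁺, where H⁺ is the image of the positive rationals. -/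
/-- The setoid on `F` whose classes are the cosets of the multiplicative
subgroup `U ⊆ Fˣ`. -/
def factorSetoid {F : Type*} [Field F] (U : Subgroup Fˣ) : Setoid F where
  r a b := ∃ u : Fˣ, u ∈ U ∧ b = a * u
  iseqv := ⟨fun a => ⟨1, U.one_mem, by simp⟩,
    fun {a b} h => by
      obtain ⟨u, hu, rfl⟩ := h
      exact ⟨u⁻¹, U.inv_mem hu, by rw [mul_assoc]; simp⟩,
    fun {a b c} h1 h2 => by
      obtain ⟨u, hu, rfl⟩ := h1
      obtain ⟨v, hv, rfl⟩ := h2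
      exact ⟨u * v, U.mul_mem hu hv, by rw [Units.val_mul, mul_assoc]⟩⟩

/-- The underlying set of the factor hyperfield `F/U`. -/
abbrev FQuot {F : Type*} [Field F] (U : Subgroup Fˣ) := Quotient (factorSetoid U)

/-- The quotient map `τ : F → F/U`. -/
def tauF {F : Type*} [Field F] (U : Subgroup Fˣ) : F → FQuot U :=
  Quotient.mk (factorSetoid U)

/-- The hyperfield data of the factor hyperfield `F/U`. -/
noncomputable def factorData {F : Type*} [Field F] (U : Subgroup Fˣ) :
    HyperfieldData (FQuot U) where
  hadd x y := {z | ∃ a b : F, tauF U a = x ∧ tauF U b = y ∧ tauF U (a + b) = z}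
  mul x y := tauF U (Quotient.out x * Quotient.out y)
  neg x := tauF U (-(Quotient.out x))
  zero := tauF U 0
  one := tauF U 1

/-- The subgroup of nonzero rational squares. -/
def Usq : Subgroup ℚˣ := (powMonoidHom 2 : ℚˣ →* ℚˣ).range

/-
For positive `a` the hypersum `b̄ ⊞ (-ā)` contains the class of `b - a u` for every nonzero
square `u`, and choosing `u > b / a` makes this negative. A negative number is not in the class of
a positive one, since squares are positive; so `b̄ ⊞ (-ā) ⊄ H⁺`, and symmetrically `ā ⊞ (-b̄) ⊄ H⁺`.
-/

section FactorHyperfield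

variable {F : Type*} [Field F] {U : Subgroup Fˣ}

lemma tauF_mul_of_mem {u : Fˣ} (hu : u ∈ U) (x : F) : tauF U (x * u) = tauF U x :=
  (Quotient.sound (s := factorSetoid U) ⟨u, hu, rfl⟩).symm

lemma factorData_neg_tauF (x : F) : (factorData U).neg (tauF U x) = tauF U (-x) := by
  obtain ⟨u, hu, hx⟩ := Quotient.exact (Quotient.out_eq (tauF U x)).symm
  show tauF U (-(tauF U x).out) = tauF U (-x)
  rw [hx, ← tauF_mul_of_mem (U.inv_mem hu), neg_mul, mul_assoc, Units.mul_inv, mul_one]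

lemma tauF_add_mem_hadd (x y : F) :
    tauF U (x + y) ∈ (factorData U).hadd (tauF U x) (tauF U y) :=
  ⟨x, y, rfl, rfl, rfl⟩

lemma tauF_notMem_image_pos [LinearOrder F] [IsStrictOrderedRing F]
    (hU : ∀ u ∈ U, 0 < (u : F)) {q : F} (hq : q < 0) :
    tauF U q ∉ tauF U '' {p : F | 0 < p} := by
  rintro ⟨p, hp, hpq⟩
  obtain ⟨u, hu, rfl⟩ := Quotient.exact hpq
  exact (mul_pos hp (hU u hu)).not_gt hq

lemma not_hadd_neg_subset_image_pos [LinearOrder F] [IsStrictOrderedRing F]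
    (hU : ∀ u ∈ U, 0 < (u : F)) (hU_unbounded : ∀ x : F, ∃ u ∈ U, x < u)
    {a : F} (ha : 0 < a) (b : F) :
    ¬ (factorData U).hadd (tauF U b) ((factorData U).neg (tauF U a)) ⊆
        tauF U '' {q : F | 0 < q} := by
  obtain ⟨u, hu, hbu⟩ := hU_unbounded (b / a)
  have hneg : b + -a * u < 0 := by
    rw [div_lt_iff₀ ha] at hbu
    linarith
  have hmem := tauF_add_mem_hadd (U := U) b (-a * u)
  rw [tauF_mul_of_mem hu, ← factorData_neg_tauF] at hmem
  exact fun hsub => tauF_notMem_image_pos hU hneg (hsub hmem)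

end FactorHyperfield

lemma Usq_pos : ∀ u ∈ Usq, 0 < (u : ℚ) := by
  rintro _ ⟨v, rfl⟩
  simpa using sq_pos_of_ne_zero v.ne_zero

lemma Usq_unbounded (x : ℚ) : ∃ u ∈ Usq, x < u := by
  have hm : (0 : ℚ) < |x| + 1 := by positivity
  refine ⟨Units.mk0 (|x| + 1) hm.ne' ^ 2, ⟨Units.mk0 (|x| + 1) hm.ne', rfl⟩, ?_⟩
  simp only [Units.val_pow_eq_pow_val, Units.val_mk0]
  nlinarith [le_abs_self x, abs_nonneg x]

theorem stmt7_general (a b : ℚ) (ha : 0 < a) (hb : 0 < b) :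
    ¬ ((factorData Usq).hadd (tauF Usq b) ((factorData Usq).neg (tauF Usq a)) ⊆
        tauF Usq '' {q : ℚ | 0 < q}) ∧
    ¬ ((factorData Usq).hadd (tauF Usq a) ((factorData Usq).neg (tauF Usq b)) ⊆
        tauF Usq '' {q : ℚ | 0 < q}) :=
  ⟨not_hadd_neg_subset_image_pos Usq_pos Usq_unbounded ha b,
    not_hadd_neg_subset_image_pos Usq_pos Usq_unbounded hb a⟩

/-- in `H = ℚ/(ℚˣ)²`, any two positive rationals in distinct
square classes are incomparable under `x̄ ≺ ȳ ↔ ȳ ⊞ (-x̄) ⊆ H⁺`. -/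
theorem stmt7 (a b : ℚ) (ha : 0 < a) (hb : 0 < b)
    (hne : tauF Usq a ≠ tauF Usq b) :
    ¬ ((factorData Usq).hadd (tauF Usq b) ((factorData Usq).neg (tauF Usq a)) ⊆
        tauF Usq '' {q : ℚ | 0 < q}) ∧
    ¬ ((factorData Usq).hadd (tauF Usq a) ((factorData Usq).neg (tauF Usq b)) ⊆
        tauF Usq '' {q : ℚ | 0 < q}) :=
  stmt7_general a b ha hb
end

section
/- Let H be an ordered hyperfield and T ⊆ H^d. A point q lies in the convex hull conv(T) if and only if the point (q, 1) ∈ H^{d+1} lies in the conic hull cone(T̃), where T̃ = {(p, 1) : p ∈ T}. -/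
/-- The iterated hypersum of a finite list of elements. -/
def listSum {H : Type*} (D : HyperfieldData H) : List H → Set H
  | [] => {D.zero}
  | x :: xs => ⋃ s ∈ listSum D xs, D.hadd x s

/-- The coordinatewise set `a ⊙ p ⊞ b ⊙ q ⊆ H^ι`. -/
def combo {H ι : Type*} (D : HyperfieldData H) (a b : H) (p q : ι → H) : Set (ι → H) :=
  {r | ∀ i, r i ∈ D.hadd (D.mul a (p i)) (D.mul b (q i))}

/-- A convex subset of `H^ι`. -/
def IsConvexSet {H ι : Type*} (D : HyperfieldData H) (P : Set H) (S : Set (ι → H)) : Prop :=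
  ∀ p ∈ S, ∀ q ∈ S, ∀ a ∈ P, ∀ b ∈ P, D.one ∈ D.hadd a b → combo D a b p q ⊆ S

/-- A conic subset of `H^ι`. -/
def IsConicSet {H ι : Type*} (D : HyperfieldData H) (P : Set H) (S : Set (ι → H)) : Prop :=
  ∀ p ∈ S, ∀ q ∈ S, ∀ a ∈ P, ∀ b ∈ P, combo D a b p q ⊆ S

/-- Membership in the convex hull of `T`: `q` lies in some finite convex
combination of points of `T` (repetition allowed). -/
def InConv {H ι : Type*} (D : HyperfieldData H) (P : Set H) (T : Set (ι → H))
    (q : ι → H) : Prop :=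
  ∃ l : List (H × (ι → H)), l ≠ [] ∧ (∀ x ∈ l, x.1 ∈ P ∧ x.2 ∈ T) ∧
    D.one ∈ listSum D (l.map Prod.fst) ∧
    ∀ i, q i ∈ listSum D (l.map fun x => D.mul x.1 (x.2 i))

/-- Membership in the conic hull of `T`. -/
def InCone {H ι : Type*} (D : HyperfieldData H) (P : Set H) (T : Set (ι → H))
    (q : ι → H) : Prop :=
  ∃ l : List (H × (ι → H)), l ≠ [] ∧ (∀ x ∈ l, x.1 ∈ P ∧ x.2 ∈ T) ∧
    ∀ i, q i ∈ listSum D (l.map fun x => D.mul x.1 (x.2 i))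

/-- `q ∈ conv(T)` iff `(q, 1) ∈ cone(T̃)` where
`T̃ = {(p, 1) : p ∈ T}`. -/
theorem stmt13 {H : Type*} {d : ℕ} (D : HyperfieldData H) (hD : IsHyperfield D)
    (P : Set H) (hP : IsOrdering D P) (T : Set (Fin d → H)) (q : Fin d → H) :
    InConv D P T q ↔
      InCone D P ((fun p : Fin d → H => Fin.snoc p D.one) '' T)
        (Fin.snoc q D.one) := by
  constructor
  · rintro ⟨l, hne, hmem, hone, hq⟩
    refine ⟨l.map (fun x => (x.1, Fin.snoc x.2 D.one)), by simp [hne], ?_, ?_⟩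
    · rintro x hx
      simp only [List.mem_map] at hx
      obtain ⟨y, hy, rfl⟩ := hx
      exact ⟨(hmem y hy).1, ⟨y.2, (hmem y hy).2, rfl⟩⟩
    · intro i
      rw [List.map_map]
      refine Fin.lastCases ?_ ?_ i
      · have : ((fun x : H × (Fin (d+1) → H) => D.mul x.1 (x.2 (Fin.last d))) ∘
            fun x : H × (Fin d → H) => (x.1, Fin.snoc x.2 D.one)) = Prod.fst := by
          funext x
          simp [hD.mul_comm x.1 D.one, hD.one_mul]
        rw [this]
        simpa using hone
      · intro j
        have : ((fun x : H × (Fin (d+1) → H) => D.mul x.1 (x.2 (Fin.castSucc j))) ∘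
            fun x : H × (Fin d → H) => (x.1, Fin.snoc x.2 D.one)) =
            fun x => D.mul x.1 (x.2 j) := by
          funext x; simp
        rw [this]
        simpa using hq j
  · rintro ⟨l, hne, hmem, hq⟩
    refine ⟨l.map (fun x => (x.1, fun j => x.2 (Fin.castSucc j))), by simp [hne], ?_, ?_, ?_⟩
    · rintro x hx
      simp only [List.mem_map] at hx
      obtain ⟨y, hy, rfl⟩ := hx
      refine ⟨(hmem y hy).1, ?_⟩
      obtain ⟨p, hp, hpy⟩ := (hmem y hy).2
      have : (fun j => y.2 (Fin.castSucc j)) = p := by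
        funext j; rw [← hpy]; simp
      rw [this]; exact hp
    · have h := hq (Fin.last d)
      simp only [Fin.snoc_last] at h
      rw [List.map_map]
      have : l.map ((Prod.fst ∘ fun x : H × (Fin (d+1) → H) =>
          (x.1, fun j => x.2 (Fin.castSucc j)))) =
          l.map (fun x => D.mul x.1 (x.2 (Fin.last d))) := by
        refine List.map_congr_left ?_
        intro x hx
        obtain ⟨p, hp, hpx⟩ := (hmem x hx).2
        have : x.2 (Fin.last d) = D.one := by rw [← hpx]; simp
        simp [this, hD.mul_comm x.1 D.one, hD.one_mul]
      rw [this]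
      exact h
    · intro j
      have h := hq (Fin.castSucc j)
      simp only [Fin.snoc_castSucc] at h
      rw [List.map_map]
      exact h
end

section
/- Let H = F/U be an ordered factor hyperfield with quotient map τ : F → H, and let T ⊆ F^d. Then conv(τ(T)) equals the union, over all T' ⊆ F^d with τ(T') = τ(T), of τ(conv(T')), where conv(T') is the ordinary convex hull over the ordered field F. -/
/-!
A hyperfield convex combination `⊞ τ(aₖ) ⊙ τ(pₖ) ∋ q` over `F/U` lifts to a positive combination
`∑ aₖ • yₖ` over `F` with `τ(∑ aₖ) = 1` and `τ ∘ yₖ = τ ∘ pₖ`: each coordinate of each term is lifted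
separately, and dividing by `aₖ` turns these lifts into new representatives `yₖ` of the points.
Then `∑ aₖ = u ∈ U`, and the points `u • yₖ` still map to `τ(T)` while `aₖ / u` are convex weights
over `F`. Conversely, `τ` carries a convex combination over `F` (with the zero weights discarded)
to a hyperfield convex combination.
-/

section FactorHyperfield

variable {F : Type*} [Field F] (U : Subgroup Fˣ)

theorem tauF_eq_tauF_iff {a b : F} : tauF U a = tauF U b ↔ ∃ u : Fˣ, u ∈ U ∧ b = a * u :=
  ⟨Quotient.exact, fun h => Quotient.sound h⟩

theorem tauF_surjective : Function.Surjective (tauF U) :=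
  Quotient.mk_surjective

theorem tauF_mul_units (a : F) {u : Fˣ} (hu : u ∈ U) : tauF U (a * u) = tauF U a :=
  ((tauF_eq_tauF_iff U).2 ⟨u, hu, rfl⟩).symm

theorem tauF_mul_congr {a b x y : F} (ha : tauF U a = tauF U x) (hb : tauF U b = tauF U y) :
    tauF U (a * b) = tauF U (x * y) := by
  obtain ⟨u, hu, rfl⟩ := (tauF_eq_tauF_iff U).1 ha
  obtain ⟨v, hv, rfl⟩ := (tauF_eq_tauF_iff U).1 hb
  refine (tauF_eq_tauF_iff U).2 ⟨u * v, U.mul_mem hu hv, ?_⟩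
  rw [Units.val_mul]
  ring

theorem factorData_mul_tauF (a b : F) :
    (factorData U).mul (tauF U a) (tauF U b) = tauF U (a * b) :=
  tauF_mul_congr U (Quotient.out_eq (tauF U a)) (Quotient.out_eq (tauF U b))

theorem mem_listSum_factorData_ofFn_iff {m : ℕ} (h : Fin m → FQuot U) (z : FQuot U) :
    z ∈ listSum (factorData U) (List.ofFn h) ↔
      ∃ a : Fin m → F, (∀ k, tauF U (a k) = h k) ∧ tauF U (∑ k, a k) = z := by
  induction m generalizing z with
  | zero =>
    simp only [List.ofFn_zero, listSum, Set.mem_singleton_iff, Finset.univ_eq_empty,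
      Finset.sum_empty, IsEmpty.forall_iff, true_and, exists_const]
    exact eq_comm
  | succ m ih =>
    simp only [List.ofFn_succ, listSum, Set.mem_iUnion, ih, Fin.sum_univ_succ, Fin.forall_fin_succ]
    constructor
    · rintro ⟨_, ⟨a, ha, rfl⟩, a₀, b, ha₀, hb, rfl⟩
      -- rescale the tail so that it sums to `b` on the nose
      obtain ⟨u, hu, rfl⟩ := (tauF_eq_tauF_iff U).1 hb.symm
      refine ⟨Fin.cons a₀ fun k => a k * u, ⟨ha₀, fun k => ?_⟩, ?_⟩
      · simpa [ha k] using tauF_mul_units U (a k) hu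
      · simp [Finset.sum_mul]
    · rintro ⟨a, ⟨ha₀, ha⟩, rfl⟩
      exact ⟨_, ⟨Fin.tail a, ha, rfl⟩, a 0, _, ha₀, rfl, rfl⟩

end FactorHyperfield

theorem exists_fin_pos_combination_of_mem_convexHull {𝕜 E : Type*} [Field 𝕜] [LinearOrder 𝕜]
    [IsStrictOrderedRing 𝕜] [AddCommGroup E] [Module 𝕜 E] {s : Set E} {x : E}
    (hx : x ∈ convexHull 𝕜 s) :
    ∃ (m : ℕ) (w : Fin m → 𝕜) (z : Fin m → E), (∀ k, 0 < w k) ∧ ∑ k, w k = 1 ∧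
      (∀ k, z k ∈ s) ∧ ∑ k, w k • z k = x := by
  obtain ⟨ι, _, z, w, hzs, -, hw, hw1, rfl⟩ := eq_pos_convex_span_of_mem_convexHull hx
  let e := (Fintype.equivFin ι).symm
  refine ⟨_, w ∘ e, z ∘ e, fun k => hw _, ?_, fun k => hzs ⟨_, rfl⟩, ?_⟩
  · rw [← hw1]
    exact e.sum_comp w
  · exact e.sum_comp fun i => w i • z i

section OrderedFactorHyperfield

variable {F : Type*} [Field F] [LinearOrder F] [IsStrictOrderedRing F] {U : Subgroup Fˣ}

theorem pos_of_tauF_eq_tauF (hU : ∀ u : Fˣ, u ∈ U → (0 : F) < (u : F)) {a b : F} (hb : 0 < b)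
    (h : tauF U b = tauF U a) : 0 < a := by
  obtain ⟨u, hu, rfl⟩ := (tauF_eq_tauF_iff U).1 h
  exact mul_pos hb (hU u hu)

theorem inConv_factorData_iff (hU : ∀ u : Fˣ, u ∈ U → (0 : F) < (u : F)) {ι : Type*}
    (S : Set (ι → FQuot U)) (q : ι → FQuot U) :
    InConv (factorData U) (tauF U '' {x : F | 0 < x}) S q ↔
      ∃ (m : ℕ) (a : Fin m → F) (y : Fin m → ι → F), (∀ k, 0 < a k) ∧
        (∀ k, tauF U ∘ y k ∈ S) ∧ tauF U (∑ k, a k) = tauF U 1 ∧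
        tauF U ∘ ∑ k, a k • y k = q := by
  rw [InConv, List.exists_iff_exists_tuple]
  constructor
  · rintro ⟨m, f, -, hl, h1, hq⟩
    simp only [List.map_ofFn, mem_listSum_factorData_ofFn_iff] at h1 hq
    simp only [List.mem_ofFn, forall_exists_index, forall_apply_eq_imp_iff] at hl
    obtain ⟨a, ha, h1⟩ := h1
    choose c hc hq using hq
    simp only [Function.comp_apply] at ha hc
    have ha_pos (k : Fin m) : 0 < a k := by
      obtain ⟨b, hb, hb'⟩ := (hl k).1
      exact pos_of_tauF_eq_tauF hU hb (hb'.trans (ha k).symm)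
    refine ⟨m, a, fun k i => c i k / a k, ha_pos, fun k => ?_, h1, ?_⟩
    · convert (hl k).2 using 1
      funext i
      obtain ⟨b, hb⟩ := tauF_surjective U ((f k).2 i)
      have hc' : tauF U (c i k) = tauF U (a k * b) := by
        rw [hc, ← ha k, ← hb, factorData_mul_tauF]
      calc tauF U (c i k / a k) = tauF U (a k * b / a k) := by
            simp only [div_eq_mul_inv]
            exact tauF_mul_congr U hc' rfl
        _ = (f k).2 i := by rw [mul_div_cancel_left₀ _ (ha_pos k).ne', hb]
    · funext i
      simp only [Function.comp_apply, Finset.sum_apply, Pi.smul_apply, smul_eq_mul,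
        mul_div_cancel₀ _ (ha_pos _).ne']
      exact hq i
  · rintro ⟨m, a, y, ha, hy, h1, rfl⟩
    refine ⟨m, fun k => (tauF U (a k), tauF U ∘ y k), ?_, ?_, ?_, fun i => ?_⟩
    · rw [Ne, List.ofFn_eq_nil_iff]
      rintro rfl
      obtain ⟨u, -, hu⟩ := (tauF_eq_tauF_iff U).1 h1
      simp at hu
    · simp only [List.mem_ofFn, forall_exists_index, forall_apply_eq_imp_iff]
      exact fun k => ⟨⟨a k, ha k, rfl⟩, hy k⟩
    · rw [List.map_ofFn, mem_listSum_factorData_ofFn_iff]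
      exact ⟨a, fun k => rfl, h1⟩
    · rw [List.map_ofFn, mem_listSum_factorData_ofFn_iff]
      refine ⟨fun k => a k * y k i, fun k => (factorData_mul_tauF U _ _).symm, ?_⟩
      simp [Finset.sum_apply]

theorem exists_image_eq_and_mem_image_convexHull (hU : ∀ u : Fˣ, u ∈ U → (0 : F) < (u : F))
    {ι : Type*} (T : Set (ι → F)) {m : ℕ} (a : Fin m → F) (y : Fin m → ι → F)
    (ha : ∀ k, 0 < a k) (hy : ∀ k, tauF U ∘ y k ∈ (fun p : ι → F => tauF U ∘ p) '' T)
    (h1 : tauF U (∑ k, a k) = tauF U 1) :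
    ∃ T' : Set (ι → F),
      (fun p : ι → F => tauF U ∘ p) '' T' = (fun p : ι → F => tauF U ∘ p) '' T ∧
      tauF U ∘ ∑ k, a k • y k ∈ (fun p : ι → F => tauF U ∘ p) '' convexHull F T' := by
  obtain ⟨u, hu, hsum⟩ := (tauF_eq_tauF_iff U).1 h1.symm
  rw [one_mul] at hsum
  have hs : (0 : F) < u := hU u hu
  have hy' (k : Fin m) : tauF U ∘ ((u : F) • y k) = tauF U ∘ y k := by
    funext i
    simpa [mul_comm] using tauF_mul_units U (y k i) hu
  refine ⟨T ∪ Set.range fun k => (u : F) • y k, ?_, _, ?_, rfl⟩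
  · rw [Set.image_union, Set.union_eq_self_of_subset_right]
    rintro _ ⟨_, ⟨k, rfl⟩, rfl⟩
    simpa only [hy'] using hy k
  · refine mem_convexHull_of_exists_fintype (fun k => a k / u) (fun k => (u : F) • y k)
      (fun k => (div_pos (ha k) hs).le) ?_ (fun k => Or.inr ⟨k, rfl⟩) ?_
    · rw [← Finset.sum_div, hsum, div_self hs.ne']
    · simp only [smul_smul, div_mul_cancel₀ _ hs.ne']

end OrderedFactorHyperfield

/-- over an ordered factor hyperfield `H = F/U`,
`conv(τ(T)) = ⋃_{τ(T') = τ(T)} τ(conv(T'))`. -/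
theorem stmt15 {F : Type*} [Field F] [LinearOrder F] [IsStrictOrderedRing F] (U : Subgroup Fˣ)
    (hU : ∀ u : Fˣ, u ∈ U → (0 : F) < (u : F)) {d : ℕ}
    (T : Set (Fin d → F)) (q : Fin d → FQuot U) :
    InConv (factorData U) (tauF U '' {x : F | 0 < x})
        ((fun p : Fin d → F => tauF U ∘ p) '' T) q ↔
      ∃ T' : Set (Fin d → F),
        (fun p : Fin d → F => tauF U ∘ p) '' T' =
          (fun p : Fin d → F => tauF U ∘ p) '' T ∧
        q ∈ (fun p : Fin d → F => tauF U ∘ p) '' (convexHull F T') := by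
  rw [inConv_factorData_iff hU]
  constructor
  · rintro ⟨m, a, y, ha, hy, h1, rfl⟩
    exact exists_image_eq_and_mem_image_convexHull hU T a y ha hy h1
  · rintro ⟨T', hT', p, hp, rfl⟩
    obtain ⟨m, w, z, hw, hw1, hz, rfl⟩ := exists_fin_pos_combination_of_mem_convexHull hp
    exact ⟨m, w, z, hw, fun k => hT' ▸ ⟨z k, hz k, rfl⟩, by rw [hw1], rfl⟩
end

section
/- Radon's theorem for ordered factor hyperfields: let H = F/U be an ordered factor hyperfield and p₁, ..., p_{d+2} ∈ H^d. Then there exists a point q ∈ H^d and a nonempty proper subset I ⊊ {1, ..., d+2} such that q ∈ conv(pᵢ : i ∈ I) ∩ conv(pⱼ : j ∉ I). -/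
/-!
Lift the points to `F^d` by choosing representatives. Radon's theorem over the ordered field `F`
splits them into two parts whose convex hulls share a point `z`. Since `τ` is multiplicative and
`τ (∑ xᵢ)` always lies in the hypersum of the `τ xᵢ`, applying `τ` coordinatewise to a convex
combination over `F` yields a convex combination over `F/U`; so `τ ∘ z` is the common point.
-/

namespace FactorHyperfield

variable {F : Type*} [Field F] (U : Subgroup Fˣ)

theorem tauF_out (x : FQuot U) : tauF U x.out = x := Quotient.out_eq x

theorem mul_tauF (a b : F) :
    (factorData U).mul (tauF U a) (tauF U b) = tauF U (a * b) := by
  obtain ⟨u, hu, ha⟩ : ∃ u ∈ U, a = (tauF U a).out * u :=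
    Quotient.mk_out (s := factorSetoid U) a
  obtain ⟨v, hv, hb⟩ : ∃ v ∈ U, b = (tauF U b).out * v :=
    Quotient.mk_out (s := factorSetoid U) b
  refine Quotient.sound ⟨u * v, U.mul_mem hu hv, ?_⟩
  rw [Units.val_mul]
  linear_combination b * ha + (tauF U a).out * u * hb

theorem tauF_sum_mem_listSum {κ : Type*} (f : κ → F) (l : List κ) :
    tauF U (l.map f).sum ∈ listSum (factorData U) (l.map fun i => tauF U (f i)) := by
  induction l with
  | nil => exact rfl
  | cons i l ih => exact Set.mem_biUnion ih ⟨f i, _, rfl, rfl, rfl⟩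

theorem inConv_tauF_sum [LinearOrder F] [IsStrictOrderedRing F] {ι κ : Type*}
    {T : Set (ι → FQuot U)} {t : Finset κ} {w : κ → F}
    (hw₀ : ∀ i ∈ t, 0 < w i) (hw₁ : ∑ i ∈ t, w i = 1) {z : κ → ι → F}
    (hz : ∀ i ∈ t, tauF U ∘ z i ∈ T) :
    InConv (factorData U) (tauF U '' {x : F | 0 < x}) T (tauF U ∘ ∑ i ∈ t, w i • z i) := by
  have ht : t.Nonempty := Finset.nonempty_of_sum_ne_zero (hw₁ ▸ one_ne_zero)
  refine ⟨t.toList.map fun i => (tauF U (w i), tauF U ∘ z i), by simp [ht.ne_empty], ?_, ?_, ?_⟩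
  · simp only [List.mem_map, Finset.mem_toList]
    rintro _ ⟨i, hi, rfl⟩
    exact ⟨⟨w i, hw₀ i hi, rfl⟩, hz i hi⟩
  · change tauF U 1 ∈ _
    simpa [hw₁, Finset.sum_map_toList, List.map_map, Function.comp_def] using
      tauF_sum_mem_listSum U w t.toList
  · intro k
    simpa [mul_tauF, Finset.sum_map_toList, List.map_map, Function.comp_def] using
      tauF_sum_mem_listSum U (fun i => w i * z i k) t.toList

theorem inConv_tauF_of_mem_convexHull [LinearOrder F] [IsStrictOrderedRing F] {ι : Type*}
    {s : Set (ι → F)} {x : ι → F} (hx : x ∈ convexHull F s) :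
    InConv (factorData U) (tauF U '' {x : F | 0 < x}) ((tauF U ∘ ·) '' s) (tauF U ∘ x) := by
  classical
  obtain ⟨κ, _, w, z, hw₀, hw₁, hz, rfl⟩ := mem_convexHull_iff_exists_fintype.mp hx
  have hpos : ∀ i ∈ Finset.univ, w i ≠ 0 → 0 < w i := fun i _ hi => (hw₀ i).lt_of_ne' hi
  -- `InConv` only admits positive weights, so the zero weights are discarded.
  rw [← Finset.sum_filter_of_ne hpos] at hw₁
  rw [← Finset.sum_filter_of_ne fun i hi hwz => hpos i hi (left_ne_zero_of_smul hwz)]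
  exact inConv_tauF_sum U (fun i hi => (Finset.mem_filter.mp hi).2) hw₁
    fun i _ => Set.mem_image_of_mem _ (hz i)

end FactorHyperfield

open FactorHyperfield in
theorem stmt16_general {F : Type*} [Field F] [LinearOrder F] [IsStrictOrderedRing F] (U : Subgroup Fˣ)
    {d : ℕ}
    (p : Fin (d + 2) → (Fin d → FQuot U)) :
    ∃ (q : Fin d → FQuot U) (I : Set (Fin (d + 2))), I.Nonempty ∧ I ≠ Set.univ ∧
      InConv (factorData U) (tauF U '' {x : F | 0 < x}) (p '' I) q ∧
      InConv (factorData U) (tauF U '' {x : F | 0 < x}) (p '' Iᶜ) q := by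
  let x : Fin (d + 2) → Fin d → F := fun i k => (p i k).out
  have hx : (tauF U ∘ ·) ∘ x = p := funext fun i => funext fun k => tauF_out U (p i k)
  have hdep : ¬ AffineIndependent F x := fun h => by
    have := h.card_le_finrank_succ.trans
      (Nat.add_le_add_right (Submodule.finrank_le (vectorSpan F (Set.range x))) 1)
    simp at this
  obtain ⟨I, z, hzI, hzIc⟩ := Convex.radon_partition hdep
  refine ⟨tauF U ∘ z, I, ?_, ?_, ?_, ?_⟩
  · by_contra! hI
    simp [hI] at hzI
  · rintro rfl
    simp at hzIc
  · simpa only [← hx, Set.image_comp] using inConv_tauF_of_mem_convexHull U hzI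
  · simpa only [← hx, Set.image_comp] using inConv_tauF_of_mem_convexHull U hzIc

/-- Radon's theorem for ordered factor hyperfields. -/
theorem stmt16 {F : Type*} [Field F] [LinearOrder F] [IsStrictOrderedRing F] (U : Subgroup Fˣ)
    (hU : ∀ u : Fˣ, u ∈ U → (0 : F) < (u : F)) {d : ℕ}
    (p : Fin (d + 2) → (Fin d → FQuot U)) :
    ∃ (q : Fin d → FQuot U) (I : Set (Fin (d + 2))), I.Nonempty ∧ I ≠ Set.univ ∧
      InConv (factorData U) (tauF U '' {x : F | 0 < x}) (p '' I) q ∧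
      InConv (factorData U) (tauF U '' {x : F | 0 < x}) (p '' Iᶜ) q :=
  stmt16_general U p
end

section
/- Let H be an ordered hyperfield and φ = c₁ ⊙ X₁ ⊞ ... ⊞ c_d ⊙ X_d a linear polynomial over H. Then the open halfspace HS(φ) = {p ∈ H^d : φ(p) ⊆ H⁺} is a conic set, and for an affine polynomial φ (with constant term) the open halfspace HS(φ) is convex. -/
/-! If every term satisfies `cᵢ rᵢ ∈ a (cᵢ pᵢ) ⊞ b (cᵢ qᵢ)`, then reassociating and commuting
the hypersum gives `φ(r) ⊆ a φ(p) ⊞ b φ(q)`, which is positive because the positive cone is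
closed under `⊙` and `⊞`. For the coordinate terms this is distributivity applied to
`r ∈ a p ⊞ b q`; for a constant term `c₀` it is distributivity applied to `1 ∈ a ⊞ b`. -/

namespace IsHyperfield

variable {H : Type*} {D : HyperfieldData H}

lemma mul_one (hD : IsHyperfield D) (a : H) : D.mul a D.one = a := by
  rw [hD.mul_comm, hD.one_mul]

lemma exists_mem_hadd_of_mem_hadd_of_mem_hadd_left (hD : IsHyperfield D) {a b c w x : H}
    (hw : w ∈ D.hadd a b) (hx : x ∈ D.hadd w c) : ∃ y ∈ D.hadd b c, x ∈ D.hadd a y := by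
  have h : x ∈ ⋃ w ∈ D.hadd a b, D.hadd w c := Set.mem_iUnion₂.2 ⟨w, hw, hx⟩
  rw [hD.hadd_assoc] at h
  simpa using h

lemma exists_mem_hadd_of_mem_hadd_of_mem_hadd_right (hD : IsHyperfield D) {a b c y x : H}
    (hy : y ∈ D.hadd b c) (hx : x ∈ D.hadd a y) : ∃ w ∈ D.hadd a b, x ∈ D.hadd w c := by
  have h : x ∈ ⋃ y ∈ D.hadd b c, D.hadd a y := Set.mem_iUnion₂.2 ⟨y, hy, hx⟩
  rw [← hD.hadd_assoc] at h
  simpa using h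

lemma exists_mem_hadd_hadd_comm (hD : IsHyperfield D) {u v s t y z x : H}
    (hy : y ∈ D.hadd u v) (hz : z ∈ D.hadd s t) (hx : x ∈ D.hadd y z) :
    ∃ y' ∈ D.hadd u s, ∃ z' ∈ D.hadd v t, x ∈ D.hadd y' z' := by
  obtain ⟨w, hw, hxw⟩ := hD.exists_mem_hadd_of_mem_hadd_of_mem_hadd_right hz hx
  obtain ⟨e, he, hwe⟩ := hD.exists_mem_hadd_of_mem_hadd_of_mem_hadd_left hy hw
  obtain ⟨m, hm, hxm⟩ := hD.exists_mem_hadd_of_mem_hadd_of_mem_hadd_left hwe hxw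
  rw [hD.hadd_comm v s] at he
  obtain ⟨z', hz', hmz'⟩ := hD.exists_mem_hadd_of_mem_hadd_of_mem_hadd_left he hm
  obtain ⟨y', hy', hxy'⟩ := hD.exists_mem_hadd_of_mem_hadd_of_mem_hadd_right hmz' hxm
  exact ⟨y', hy', z', hz', hxy'⟩

lemma mul_mem_hadd_mul_mul (hD : IsHyperfield D) {a b c p q r : H}
    (hr : r ∈ D.hadd (D.mul a p) (D.mul b q)) :
    D.mul c r ∈ D.hadd (D.mul a (D.mul c p)) (D.mul b (D.mul c q)) := by
  have hcomm : ∀ x y, D.mul c (D.mul x y) = D.mul x (D.mul c y) := fun x y => by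
    rw [← hD.mul_assoc, hD.mul_comm c x, hD.mul_assoc]
  rw [← hcomm, ← hcomm, ← hD.distrib]
  exact ⟨r, hr, rfl⟩

lemma listSum_map_mul (hD : IsHyperfield D) (a : H) (l : List H) :
    listSum D (l.map (D.mul a)) = D.mul a '' listSum D l := by
  induction l with
  | nil => simp [listSum, hD.mul_comm a D.zero, hD.zero_mul]
  | cons x l ih =>
    simp only [List.map_cons, listSum, ih, Set.biUnion_image, Set.image_iUnion₂, hD.distrib]

lemma exists_mem_hadd_of_mem_listSum_ofFn (hD : IsHyperfield D) :
    ∀ {n : ℕ} {f g h : Fin n → H}, (∀ i, f i ∈ D.hadd (g i) (h i)) →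
      ∀ x ∈ listSum D (List.ofFn f), ∃ s ∈ listSum D (List.ofFn g),
        ∃ t ∈ listSum D (List.ofFn h), x ∈ D.hadd s t
  | 0, _, _, _, _, x, hx => ⟨D.zero, rfl, D.zero, rfl, by simpa [listSum, hD.zero_hadd] using hx⟩
  | n + 1, f, g, h, hfgh, x, hx => by
    simp only [List.ofFn_succ, listSum, Set.mem_iUnion₂] at hx ⊢
    obtain ⟨y, hy, hxy⟩ := hx
    obtain ⟨s, hs, t, ht, hyst⟩ :=
      hD.exists_mem_hadd_of_mem_listSum_ofFn (fun i => hfgh i.succ) y hy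
    obtain ⟨s', hs', t', ht', hx⟩ := hD.exists_mem_hadd_hadd_comm (hfgh 0) hyst hxy
    exact ⟨s', ⟨s, hs, hs'⟩, t', ⟨t, ht, ht'⟩, hx⟩

lemma listSum_ofFn_subset_of_mem_hadd_mul (hD : IsHyperfield D) {P : Set H}
    (hP : IsOrdering D P) {n : ℕ} {f g h : Fin n → H} {a b : H} (ha : a ∈ P) (hb : b ∈ P)
    (hfgh : ∀ i, f i ∈ D.hadd (D.mul a (g i)) (D.mul b (h i)))
    (hg : listSum D (List.ofFn g) ⊆ P) (hh : listSum D (List.ofFn h) ⊆ P) :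
    listSum D (List.ofFn f) ⊆ P := by
  obtain ⟨hPadd, hPmul, -⟩ := hP
  intro x hx
  obtain ⟨s, hs, t, ht, hx⟩ := hD.exists_mem_hadd_of_mem_listSum_ofFn hfgh x hx
  have hmap : ∀ (c : H) (k : Fin n → H),
      List.ofFn (fun i => D.mul c (k i)) = (List.ofFn k).map (D.mul c) :=
    fun _ _ => (List.map_ofFn ..).symm
  rw [hmap, hD.listSum_map_mul] at hs ht
  obtain ⟨s, hs, rfl⟩ := hs
  obtain ⟨t, ht, rfl⟩ := ht
  exact hPadd _ (hPmul a ha s (hg hs)) _ (hPmul b hb t (hh ht)) hx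

end IsHyperfield

/-- open halfspaces of linear polynomials are conic, and open
halfspaces of affine polynomials are convex. -/
theorem stmt18 {H : Type*} {d : ℕ} (D : HyperfieldData H) (hD : IsHyperfield D)
    (P : Set H) (hP : IsOrdering D P) (c0 : H) (c : Fin d → H) :
    IsConicSet D P
      {p : Fin d → H | listSum D (List.ofFn fun i => D.mul (c i) (p i)) ⊆ P} ∧
    IsConvexSet D P
      {p : Fin d → H |
        listSum D (c0 :: List.ofFn fun i => D.mul (c i) (p i)) ⊆ P} := by
  constructor
  · intro p hp q hq a ha b hb r hr
    exact hD.listSum_ofFn_subset_of_mem_hadd_mul hP ha hb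
      (fun i => hD.mul_mem_hadd_mul_mul (hr i)) hp hq
  · intro p hp q hq a ha b hb hab r hr
    have hc0 : c0 ∈ D.hadd (D.mul a c0) (D.mul b c0) := by
      have h := hD.mul_mem_hadd_mul_mul (a := a) (b := b) (c := c0) (p := D.one) (q := D.one)
        (by rwa [hD.mul_one, hD.mul_one])
      rwa [hD.mul_one] at h
    have hcons : ∀ s : Fin d → H,
        c0 :: List.ofFn (fun i => D.mul (c i) (s i)) =
          List.ofFn (Fin.cons c0 fun i => D.mul (c i) (s i) : Fin (d + 1) → H) :=
      fun s => (List.ofFn_cons _ _).symm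
    simp only [Set.mem_ofPred_eq, hcons] at hp hq ⊢
    exact hD.listSum_ofFn_subset_of_mem_hadd_mul hP ha hb
      (Fin.cases hc0 fun i => hD.mul_mem_hadd_mul_mul (hr i)) hp hq
end
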